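/- Let R satisfy (∗), let π be a permutation of N with sd(R,π) = {a}, and let 1 ≤ k < j ≤ n be such that a ∈ max_{R_{π(j)}}(sd(R,π|_k)). Define the permutation π' = π(1) … π(k) π(j) π(k+1) … π(j−1) π(j+1) … π(n), obtained from π by moving π(j) to position k+1. Then sd(R,π') = {a}. -/

import Mathlib

/-!
Moving the dictator `d = π(j)` forward to position `k + 1` does not change the outcome because,
at every stage `t ≥ k` of `π`, the alternative `a` is maximal both for `d` and for the dictator
`π(t + 1)` acting there. When one element is maximal for two transitive relations on `B`,
refining `B` by the two relations in either order yields the same set, so `d` can be swapped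
past each of `π(k + 1), …, π(j − 1)` in turn, after which `π'` and `π` coincide again.
-/

/-- `maxSet r B` is the set of most preferred alternatives from `B`
according to the (weak) preference relation `r`. -/
def maxSet {A : Type*} (r : A → A → Prop) (B : Set A) : Set A :=
  {x | x ∈ B ∧ ∀ y ∈ B, r x y}

/-- `sdPrefix R π t` is the set of alternatives surviving serial dictatorship after the
first `t` dictators `π 0, …, π (t-1)` have refined the set, starting from all of `A`. -/
def sdPrefix {n : ℕ} {A : Type*} (R : Fin n → A → A → Prop) (π : Equiv.Perm (Fin n)) :
    ℕ → Set A
  | 0 => Set.univ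
  | t + 1 => if h : t < n then maxSet (R (π ⟨t, h⟩)) (sdPrefix R π t) else sdPrefix R π t

/-- Serial dictatorship: the set of alternatives remaining after all `n` dictators. -/
def sd {n : ℕ} {A : Type*} (R : Fin n → A → A → Prop) (π : Equiv.Perm (Fin n)) : Set A :=
  sdPrefix R π n

section maxSet

variable {A : Type*} {r s : A → A → Prop} {B C : Set A} {z : A}

lemma maxSet_subset (r : A → A → Prop) (B : Set A) : maxSet r B ⊆ B :=
  fun _ h => h.1

lemma mem_maxSet_of_subset (hz : z ∈ maxSet r B) (hCB : C ⊆ B) (hzC : z ∈ C) :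
    z ∈ maxSet r C :=
  ⟨hzC, fun y hy => hz.2 y (hCB hy)⟩

lemma maxSet_maxSet_eq_inter (hs : Transitive s) (hzr : z ∈ maxSet r B)
    (hzs : z ∈ maxSet s B) : maxSet s (maxSet r B) = maxSet r B ∩ maxSet s B := by
  ext x
  constructor
  · rintro ⟨hx, hxs⟩
    exact ⟨hx, hx.1, fun y hy => hs (hxs z hzr) (hzs.2 y hy)⟩
  · rintro ⟨hx, hxs⟩
    exact ⟨hx, fun y hy => hxs.2 y hy.1⟩

lemma maxSet_comm (hr : Transitive r) (hs : Transitive s) (hzr : z ∈ maxSet r B)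
    (hzs : z ∈ maxSet s B) : maxSet s (maxSet r B) = maxSet r (maxSet s B) := by
  rw [maxSet_maxSet_eq_inter hs hzr hzs, maxSet_maxSet_eq_inter hr hzs hzr, Set.inter_comm]

end maxSet

section sdPrefix

variable {n : ℕ} {A : Type*} (R : Fin n → A → A → Prop) (π σ : Equiv.Perm (Fin n))

lemma sdPrefix_succ (i : Fin n) :
    sdPrefix R π (i + 1) = maxSet (R (π i)) (sdPrefix R π i) := by
  rw [sdPrefix, dif_pos i.2]

lemma sdPrefix_succ_of_le {t : ℕ} (ht : n ≤ t) : sdPrefix R π (t + 1) = sdPrefix R π t := by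
  rw [sdPrefix, dif_neg (not_lt.mpr ht)]

lemma sdPrefix_antitone : Antitone (sdPrefix R π) := by
  refine antitone_nat_of_succ_le fun t => ?_
  rcases lt_or_ge t n with ht | ht
  · exact (sdPrefix_succ R π ⟨t, ht⟩).trans_subset (maxSet_subset _ _)
  · exact (sdPrefix_succ_of_le R π ht).subset

lemma sdPrefix_eq_sd {t : ℕ} (ht : n ≤ t) : sdPrefix R π t = sd R π := by
  induction t, ht using Nat.le_induction with
  | base => rfl
  | succ t ht ih => rw [sdPrefix_succ_of_le R π ht, ih]

lemma mem_sdPrefix_of_mem_sd {a : A} (ha : a ∈ sd R π) (t : ℕ) : a ∈ sdPrefix R π t := by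
  rcases le_total t n with ht | ht
  · exact sdPrefix_antitone R π ht ha
  · rwa [sdPrefix_eq_sd R π ht]

variable {R π σ}

lemma sdPrefix_congr {m t : ℕ} (hmt : m ≤ t) (hm : sdPrefix R π m = sdPrefix R σ m)
    (hagree : ∀ i : Fin n, m ≤ i.1 → i.1 < t → π i = σ i) :
    sdPrefix R π t = sdPrefix R σ t := by
  induction t, hmt using Nat.le_induction with
  | base => exact hm
  | succ t hmt ih =>
    have ih := ih fun i hi hit => hagree i hi (by omega)
    rcases lt_or_ge t n with htn | htn
    · rw [sdPrefix_succ R π ⟨t, htn⟩, sdPrefix_succ R σ ⟨t, htn⟩, ih,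
        hagree ⟨t, htn⟩ hmt (Nat.lt_succ_self t)]
    · rw [sdPrefix_succ_of_le R π htn, sdPrefix_succ_of_le R σ htn, ih]

lemma maxSet_sdPrefix_succ_comm (htrans : ∀ i, Transitive (R i)) {d i : Fin n} {a : A}
    (had : a ∈ maxSet (R d) (sdPrefix R π i)) (ha : a ∈ sdPrefix R π (i + 1)) :
    maxSet (R (π i)) (maxSet (R d) (sdPrefix R π i)) = maxSet (R d) (sdPrefix R π (i + 1)) := by
  rw [sdPrefix_succ R π i] at ha ⊢
  exact maxSet_comm (htrans d) (htrans (π i)) had ha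

end sdPrefix

theorem sd_move {n : ℕ} {A : Type*}
    (R : Fin n → A → A → Prop)
    (htrans : ∀ i, Transitive (R i))
    (π π' : Equiv.Perm (Fin n)) (a : A)
    (k j : ℕ) (hkj : k < j) (hj : j ≤ n)
    (ha : sd R π = {a})
    (hmax : a ∈ maxSet (R (π ⟨j - 1, by omega⟩)) (sdPrefix R π k))
    (h1 : ∀ t : Fin n, t.1 < k → π' t = π t)
    (h2 : π' ⟨k, by omega⟩ = π ⟨j - 1, by omega⟩)
    (h3 : ∀ t : Fin n, k < t.1 → t.1 ≤ j - 1 →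
      π' t = π ⟨t.1 - 1, lt_of_le_of_lt (Nat.sub_le t.1 1) t.2⟩)
    (h4 : ∀ t : Fin n, j - 1 < t.1 → π' t = π t) :
    sd R π' = {a} := by
  set d := π ⟨j - 1, by omega⟩
  have ha_mem : ∀ t, a ∈ sdPrefix R π t := mem_sdPrefix_of_mem_sd R π (ha ▸ rfl)
  have hfirst : sdPrefix R π' k = sdPrefix R π k :=
    sdPrefix_congr (Nat.zero_le k) rfl fun i _ hi => h1 i hi
  have hmoved : ∀ t, k ≤ t → t ≤ j - 1 →
      sdPrefix R π' (t + 1) = maxSet (R d) (sdPrefix R π t) := by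
    intro t hkt
    induction t, hkt using Nat.le_induction with
    | base => intro _; rw [sdPrefix_succ R π' ⟨k, by omega⟩, h2, hfirst]
    | succ t hkt ih =>
      intro ht
      have had := mem_maxSet_of_subset hmax (sdPrefix_antitone R π hkt) (ha_mem t)
      rw [sdPrefix_succ R π' ⟨t + 1, by omega⟩, h3 ⟨t + 1, _⟩ (Nat.lt_succ_of_le hkt) ht,
        ih (by omega)]
      exact maxSet_sdPrefix_succ_comm (i := ⟨t, by omega⟩) htrans had (ha_mem (t + 1))
  have hlast : sdPrefix R π' j = sdPrefix R π j := by
    obtain ⟨t, rfl⟩ : ∃ t, j = t + 1 := ⟨j - 1, by omega⟩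
    rw [hmoved t (by omega) le_rfl, sdPrefix_succ R π ⟨t, by omega⟩]
    rfl
  rw [← ha, ← sdPrefix_eq_sd R π' le_rfl, ← sdPrefix_eq_sd R π le_rfl]
  exact sdPrefix_congr hj hlast fun i hi _ => h4 i (by omega)
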